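/- Equivalence of overdetermined problem and KV minimization: (ω, α, u) solves the overdetermined problem (u harmonic in Ω = D\ω̄, u = f and ∂u/∂n = g on Σ, ∂u/∂n + αu = 0 on Γ) if and only if J(ω, α) = 0, where J(ω,α) = (1/2)∫_Ω|∇(u_D − u_N)|² + (1/2)∫_Γ α|u_D − u_N|², with u_D, u_N the Dirichlet-Robin and Neumann-Robin solutions. -/
import Mathlib


/-- Equivalence of the overdetermined problem and the Kohn–Vogelius minimization:
there exists a state `u` solving simultaneously the Dirichlet condition `u|_Σ = f`
(encoded by the Dirichlet trace `TS u = f`), the weak harmonic–Robin equation on the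
test space `V = ker TS`, and the weak Neumann–Robin equation (encoding `∂u/∂n = g`
on `Σ`), if and only if `J(ω,α) = (1/2) a(u_D − u_N, u_D − u_N) = 0`, where `u_D`
and `u_N` are the Dirichlet-Robin and Neumann-Robin states. -/
theorem stmt_12 {H S : Type*} [NormedAddCommGroup H] [InnerProductSpace ℝ H] [CompleteSpace H]
    [NormedAddCommGroup S] [NormedSpace ℝ S]
    (a : H →L[ℝ] H →L[ℝ] ℝ)
    (hsymm : ∀ u v : H, a u v = a v u)
    (c : ℝ) (hc : 0 < c) (hcoer : ∀ u : H, c * ‖u‖ ^ 2 ≤ a u u)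
    (TS : H →L[ℝ] S) (f : S) (g : H →L[ℝ] ℝ)
    (uD uN : H)
    (hDdir : TS uD = f)
    (hDeq : ∀ ψ : H, TS ψ = 0 → a uD ψ = 0)
    (hNeq : ∀ ψ : H, a uN ψ = g ψ) :
    (∃ u : H, TS u = f ∧ (∀ ψ : H, TS ψ = 0 → a u ψ = 0) ∧ (∀ ψ : H, a u ψ = g ψ))
      ↔ (1 / 2 : ℝ) * a (uD - uN) (uD - uN) = 0 := by
  have hzero : ∀ w : H, a w w ≤ 0 → w = 0 := by
    intro w hw
    have h1 := hcoer w
    have h2 : c * ‖w‖ ^ 2 ≤ 0 := h1.trans hw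
    have h3 : ‖w‖ ^ 2 ≤ 0 := nonpos_of_mul_nonpos_right (by nlinarith [sq_nonneg ‖w‖]) hc
    have : ‖w‖ = 0 := by nlinarith [sq_nonneg ‖w‖, norm_nonneg w]
    exact norm_eq_zero.mp this
  constructor
  · rintro ⟨u, huf, huker, hug⟩
    -- u = uD
    have hDu : uD = u := by
      have hker : TS (uD - u) = 0 := by rw [map_sub, hDdir, huf, sub_self]
      have haa : a (uD - u) (uD - u) = 0 := by
        have h1 := hDeq (uD - u) hker
        have h2 := huker (uD - u) hker
        simp only [map_sub, ContinuousLinearMap.sub_apply] at h1 h2 ⊢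
        linarith
      exact sub_eq_zero.mp (hzero (uD - u) (le_of_eq haa))
    have hNu : uN = u := by
      have haa : a (uN - u) (uN - u) = 0 := by
        have h1 := hNeq (uN - u)
        have h2 := hug (uN - u)
        simp only [map_sub, ContinuousLinearMap.sub_apply] at h1 h2 ⊢
        linarith
      exact sub_eq_zero.mp (hzero (uN - u) (le_of_eq haa))
    rw [hDu, hNu, sub_self]
    simp
  · intro hJ
    have hdd : a (uD - uN) (uD - uN) = 0 := by linarith
    have heq : uD = uN := sub_eq_zero.mp (hzero _ (le_of_eq hdd))
    refine ⟨uD, hDdir, hDeq, fun ψ => ?_⟩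
    rw [heq]; exact hNeq ψ
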